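/- Let F be the free group with basis {a, b}. Then the subgroup L(F) of 𝔛(F) is generated by the three elements a ā⁻¹, b b̄⁻¹ and ab (āb̄)⁻¹ (the images in 𝔛(F) of these words in the free product). -/

import Mathlib

open Monoid

def weakCommRel (G : Type*) [Group G] : Set (Monoid.Coprod G G) :=
  {x | ∃ g : G, x = (Coprod.inl g)⁻¹ * (Coprod.inr g)⁻¹ * Coprod.inl g * Coprod.inr g}

def SidkiX (G : Type*) [Group G] : Type _ :=
  Monoid.Coprod G G ⧸ Subgroup.normalClosure (weakCommRel G)

instance (G : Type*) [Group G] : Group (SidkiX G) :=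
  inferInstanceAs (Group (Monoid.Coprod G G ⧸ Subgroup.normalClosure (weakCommRel G)))

/-- The canonical projection `G ∗ Ḡ → 𝔛(G)`. -/
def SidkiX.mk (G : Type*) [Group G] : Monoid.Coprod G G →* SidkiX G :=
  QuotientGroup.mk' (Subgroup.normalClosure (weakCommRel G))

/-- The homomorphism `𝔛(G) → G` sending both `g` and `ḡ` to `g`. -/
def SidkiX.proj (G : Type*) [Group G] : SidkiX G →* G :=
  QuotientGroup.lift _ (Coprod.lift (MonoidHom.id G) (MonoidHom.id G)) (by
    intro x hx
    refine Subgroup.normalClosure_le_normal ?_ hx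
    rintro _ ⟨g, rfl⟩
    simp [MonoidHom.mem_ker, Coprod.lift_apply_inl, Coprod.lift_apply_inr, mul_assoc])

/-- The normal subgroup `L(G) = ker(𝔛(G) → G)`. -/
def SidkiL (G : Type*) [Group G] : Subgroup (SidkiX G) :=
  (SidkiX.proj G).ker

/-!
Write `δ g = g ḡ⁻¹`. Because `g` and `ḡ` commute in `𝔛(G)`, one gets `δ g⁻¹ = (δ g)⁻¹` and
`δ (t u t) = δ t δ u δ t`, while conjugation by `t` sends `δ g` to `δ (t g) (δ t)⁻¹`. Starting from
`δ a`, `δ b`, `δ (ab)`, these rules produce `δ` of the few words needed to see that the subgroup `K`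
they generate is normalised by `a^{±1}`, `b^{±1}` and `ā = (δ a)⁻¹ a`, `b̄`; so `K` is normal when
`a, b` generate `G`. Modulo a normal subgroup containing `δ a` and `δ b`, every `g` agrees with `ḡ`,
so `𝔛(G) / K` is a quotient of `G` through `𝔛(G) → G`, which gives `L(G) ≤ K`.
-/

theorem Subgroup.mem_normalizer_closure_of_conj_mem {X : Type*} [Group X] {S : Set X} {x : X}
    (h₁ : ∀ s ∈ S, x * s * x⁻¹ ∈ Subgroup.closure S)
    (h₂ : ∀ s ∈ S, x⁻¹ * s * x ∈ Subgroup.closure S) :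
    x ∈ Subgroup.normalizer (Subgroup.closure S : Set X) := by
  rw [Subgroup.mem_normalizer_iff_map_conj_eq, MonoidHom.map_closure]
  refine le_antisymm (Subgroup.closure_le _ |>.mpr ?_) (Subgroup.closure_le _ |>.mpr ?_)
  · rintro _ ⟨s, hs, rfl⟩
    exact h₁ s hs
  · intro s hs
    rw [← MonoidHom.map_closure]
    exact ⟨_, h₂ s hs, by simp [mul_assoc]⟩

namespace SidkiX

open Subgroup

variable {G : Type*} [Group G]

def inl : G →* SidkiX G := (SidkiX.mk G).comp Coprod.inl

def inr : G →* SidkiX G := (SidkiX.mk G).comp Coprod.inr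

def delta (g : G) : SidkiX G := SidkiX.mk G (Coprod.inl g * (Coprod.inr g)⁻¹)

@[ext]
theorem hom_ext {M : Type*} [Monoid M] {f f' : SidkiX G →* M}
    (hl : f.comp inl = f'.comp inl) (hr : f.comp inr = f'.comp inr) : f = f' :=
  QuotientGroup.monoidHom_ext _ (Coprod.hom_ext hl hr)

theorem closure_image_inl_union_image_inr {S : Set G} (hS : closure S = ⊤) :
    closure (inl '' S ∪ inr '' S) = ⊤ := by
  rw [Subgroup.closure_union, ← MonoidHom.map_closure, ← MonoidHom.map_closure, hS, inl, inr,
    ← Subgroup.map_map, ← Subgroup.map_map, ← Subgroup.map_sup, ← MonoidHom.range_eq_map,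
    ← MonoidHom.range_eq_map, Coprod.range_inl_sup_range_inr]
  exact Subgroup.map_top_of_surjective _ (QuotientGroup.mk'_surjective _)

theorem commute_inl_inr (g : G) : Commute (inl g) (inr g) := by
  have h : (inl g)⁻¹ * (inr g)⁻¹ * inl g * inr g = 1 :=
    (QuotientGroup.eq_one_iff _).mpr (subset_normalClosure ⟨g, rfl⟩)
  calc inl g * inr g = inr g * inl g * ((inl g)⁻¹ * (inr g)⁻¹ * inl g * inr g) := by group
    _ = inr g * inl g := by rw [h, mul_one]

theorem delta_eq (g : G) : delta g = inl g * (inr g)⁻¹ := by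
  simp only [delta, inl, inr, map_mul, map_inv, MonoidHom.comp_apply]

theorem inr_eq (g : G) : inr g = (delta g)⁻¹ * inl g := by
  rw [delta_eq]; group

@[simp]
theorem delta_one : delta (1 : G) = 1 := by
  simp [delta_eq]

theorem delta_inv (g : G) : delta g⁻¹ = (delta g)⁻¹ := by
  simp only [delta_eq, map_inv, inv_inv, mul_inv_rev]
  exact (commute_inl_inr g).inv_left.eq

theorem delta_mul (g h : G) : delta (g * h) = inl g * delta h * (inl g)⁻¹ * delta g := by
  simp only [delta_eq, map_mul]; group

theorem inl_mul_delta_mul_inv (t g : G) :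
    inl t * delta g * (inl t)⁻¹ = delta (t * g) * (delta t)⁻¹ := by
  rw [delta_mul]; group

theorem inv_inl_mul_delta_mul (t g : G) :
    (inl t)⁻¹ * delta g * inl t = delta (t⁻¹ * g) * delta t := by
  rw [← inv_inv (delta t), ← delta_inv, ← inl_mul_delta_mul_inv, map_inv, inv_inv]

theorem delta_mul_mul_self (t u : G) : delta (t * u * t) = delta t * delta u * delta t := by
  have hut : Commute (inl u * inl t) (inr u * inr t)⁻¹ := by
    simpa only [map_mul] using (commute_inl_inr (u * t)).inv_right
  calc delta (t * u * t)
      = inl t * ((inl u * inl t) * (inr u * inr t)⁻¹) * (inr t)⁻¹ := by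
        simp only [delta_eq, map_mul]; group
    _ = inl t * (inr t)⁻¹ * ((inr u)⁻¹ * inl u) * (inl t * (inr t)⁻¹) := by
        rw [hut.eq]; group
    _ = delta t * delta u * delta t := by
        rw [← (commute_inl_inr u).inv_right.eq, delta_eq, delta_eq]

theorem proj_inl (g : G) : proj G (inl g) = g :=
  Coprod.lift_apply_inl (MonoidHom.id G) (MonoidHom.id G) g

theorem proj_inr (g : G) : proj G (inr g) = g :=
  Coprod.lift_apply_inr (MonoidHom.id G) (MonoidHom.id G) g

theorem delta_mem_sidkiL (g : G) : delta g ∈ SidkiL G := by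
  simp [SidkiL, delta_eq, proj_inl, proj_inr]

section Closure

variable {H : Subgroup (SidkiX G)} {t u : G}

theorem delta_inv_mem (ht : delta t ∈ H) : delta t⁻¹ ∈ H := by
  rw [delta_inv]; exact inv_mem ht

theorem delta_mul_mul_self_mem (ht : delta t ∈ H) (hu : delta u ∈ H) : delta (t * u * t) ∈ H := by
  rw [delta_mul_mul_self]; exact mul_mem (mul_mem ht hu) ht

theorem delta_mem_of_mem_closure [H.Normal] {S : Set G} (hS : ∀ s ∈ S, delta s ∈ H) {g : G}
    (hg : g ∈ closure S) : delta g ∈ H := by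
  induction hg using closure_induction with
  | mem s hs => exact hS s hs
  | one => simp
  | mul g h _ _ hg hh => rw [delta_mul]; exact mul_mem (‹H.Normal›.conj_mem _ hh _) hg
  | inv g _ hg => exact delta_inv_mem hg

end Closure

theorem sidkiL_le_of_delta_mem {N : Subgroup (SidkiX G)} [N.Normal] (h : ∀ g, delta g ∈ N) :
    SidkiL G ≤ N := by
  have key : (QuotientGroup.mk' N).comp (inl.comp (proj G)) = QuotientGroup.mk' N := by
    refine hom_ext (MonoidHom.ext fun g ↦ ?_) (MonoidHom.ext fun g ↦ ?_)
    · simp [proj_inl]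
    · simpa [proj_inr, QuotientGroup.eq_iff_div_mem, div_eq_mul_inv, ← delta_eq] using h g
  intro x hx
  rw [← QuotientGroup.eq_one_iff, ← QuotientGroup.mk'_apply, ← key]
  simp [(MonoidHom.mem_ker).mp hx]

def deltaSpan (a b : G) : Subgroup (SidkiX G) := closure {delta a, delta b, delta (a * b)}

section TwoGenerators

variable {a b : G}

theorem delta_left_mem_deltaSpan : delta a ∈ deltaSpan a b := subset_closure (by simp)

theorem delta_right_mem_deltaSpan : delta b ∈ deltaSpan a b := subset_closure (by simp)

theorem delta_mul_mem_deltaSpan : delta (a * b) ∈ deltaSpan a b := subset_closure (by simp)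

theorem delta_mem_deltaSpan_of_mem_pair {t : G} (ht : t ∈ ({a, b} : Set G)) :
    delta t ∈ deltaSpan a b := by
  rcases ht with rfl | rfl
  exacts [delta_left_mem_deltaSpan, delta_right_mem_deltaSpan]

theorem delta_mul_swap_mem_deltaSpan : delta (b * a) ∈ deltaSpan a b := by
  have hab' : delta (a * b⁻¹) ∈ deltaSpan a b := by
    rw [show a * b⁻¹ = a * (a * b)⁻¹ * a by group]
    exact delta_mul_mul_self_mem delta_left_mem_deltaSpan (delta_inv_mem delta_mul_mem_deltaSpan)
  rw [show b * a = b * (a * b⁻¹) * b by group]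
  exact delta_mul_mul_self_mem delta_right_mem_deltaSpan hab'

theorem deltaSpan_le_swap : deltaSpan b a ≤ deltaSpan a b := by
  refine closure_le _ |>.mpr ?_
  rintro _ (rfl | rfl | rfl)
  exacts [delta_right_mem_deltaSpan, delta_left_mem_deltaSpan, delta_mul_swap_mem_deltaSpan]

theorem deltaSpan_comm : deltaSpan a b = deltaSpan b a :=
  le_antisymm deltaSpan_le_swap deltaSpan_le_swap

theorem inl_mem_normalizer_deltaSpan : inl a ∈ normalizer (deltaSpan a b : Set (SidkiX G)) := by
  have ha := delta_left_mem_deltaSpan (a := a) (b := b)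
  have hb := delta_right_mem_deltaSpan (a := a) (b := b)
  have hab := delta_mul_mem_deltaSpan (a := a) (b := b)
  apply mem_normalizer_closure_of_conj_mem
  · rintro _ (rfl | rfl | rfl) <;> rw [inl_mul_delta_mul_inv] <;> refine mul_mem ?_ (inv_mem ha)
    · rw [show a * a = a * 1 * a by group]
      exact delta_mul_mul_self_mem ha (by simp)
    · exact hab
    · have hb' : delta (a⁻¹ * b⁻¹ * a⁻¹) ∈ deltaSpan a b :=
        delta_mul_mul_self_mem (delta_inv_mem ha) (delta_inv_mem hb)
      rw [show a * (a * b) = a * (a * b * (a⁻¹ * b⁻¹ * a⁻¹) * (a * b)) * a by group]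
      exact delta_mul_mul_self_mem ha (delta_mul_mul_self_mem hab hb')
  · rintro _ (rfl | rfl | rfl) <;> rw [inv_inl_mul_delta_mul] <;> refine mul_mem ?_ ha
    · simp
    · rw [show a⁻¹ * b = a⁻¹ * (b * a) * a⁻¹ by group]
      exact delta_mul_mul_self_mem (delta_inv_mem ha) delta_mul_swap_mem_deltaSpan
    · rw [inv_mul_cancel_left]
      exact hb

theorem deltaSpan_normal (hG : closure {a, b} = ⊤) : (deltaSpan a b).Normal := by
  have hinl : ∀ t ∈ ({a, b} : Set G), inl t ∈ normalizer (deltaSpan a b : Set (SidkiX G)) := by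
    rintro _ (rfl | rfl)
    · exact inl_mem_normalizer_deltaSpan
    · rw [deltaSpan_comm]
      exact inl_mem_normalizer_deltaSpan
  rw [← normalizer_eq_top_iff, eq_top_iff, ← closure_image_inl_union_image_inr hG, closure_le]
  rintro _ (⟨t, ht, rfl⟩ | ⟨t, ht, rfl⟩)
  · exact hinl t ht
  · rw [inr_eq]
    exact mul_mem (le_normalizer (inv_mem (delta_mem_deltaSpan_of_mem_pair ht))) (hinl t ht)

theorem sidkiL_eq_deltaSpan (hG : closure {a, b} = ⊤) : SidkiL G = deltaSpan a b := by
  have := deltaSpan_normal hG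
  refine le_antisymm (sidkiL_le_of_delta_mem fun g ↦ ?_) (closure_le _ |>.mpr ?_)
  · exact delta_mem_of_mem_closure (fun _ ↦ delta_mem_deltaSpan_of_mem_pair) (hG ▸ mem_top g)
  · rintro _ (rfl | rfl | rfl) <;> exact delta_mem_sidkiL _

end TwoGenerators

end SidkiX

/-- **Proposition 2.7.** If `F` is the free group with basis `{a, b}`, then `L(F)` is
generated by the three elements `a ā⁻¹`, `b b̄⁻¹` and `ab (āb̄)⁻¹`. -/
theorem sidkiL_freeGroup_two_generators :
    letI F := FreeGroup (Fin 2)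
    letI a : F := FreeGroup.of 0
    letI b : F := FreeGroup.of 1
    SidkiL F = Subgroup.closure
      {SidkiX.mk F (Coprod.inl a * (Coprod.inr a)⁻¹),
       SidkiX.mk F (Coprod.inl b * (Coprod.inr b)⁻¹),
       SidkiX.mk F (Coprod.inl (a * b) * (Coprod.inr (a * b))⁻¹)} := by
  refine SidkiX.sidkiL_eq_deltaSpan ?_
  rw [← FreeGroup.closure_range_of]
  congr 1
  ext x
  simp [Fin.exists_fin_two, eq_comm]
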